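/- arXiv:1008.2563 — 3 statements merged into one kernel-verified Lean document; each statement's English description precedes it below -/
import Mathlib

section
/- For any invertible linear map D : ℝ^d → ℝ^d and any unit vectors w, v in ℝ^d, one has 2(1 − cos∠(Dw, Dv)) ≤ K(D)² · ‖w − v‖², where K(D) = ‖D‖·‖D⁻¹‖ and ∠(u₁,u₂) denotes the angle between nonzero vectors, i.e. cos∠(u₁,u₂) = ⟨u₁,u₂⟩/(‖u₁‖‖u₂‖). -/
/-!
By AM-GM, `2(1 - cos∠(x, y))·‖x‖‖y‖ = 2‖x‖‖y‖ - 2⟨x, y⟩ ≤ ‖x - y‖²`. Apply this to `x = Dw`,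
`y = Dv`: the right side is at most `‖D‖²‖w - v‖²`, while `‖Dw‖, ‖Dv‖ ≥ ‖D⁻¹‖⁻¹` for unit `w, v`,
so dropping the factor `‖Dw‖‖Dv‖` costs at most `‖D⁻¹‖²`.
-/

open InnerProductGeometry

/-- Quasiconformal distortion `K(D) = ‖D‖·‖D⁻¹‖` of an invertible linear map of `ℝ^d`. -/
noncomputable def qdist {d : ℕ}
    (D : EuclideanSpace ℝ (Fin d) ≃L[ℝ] EuclideanSpace ℝ (Fin d)) : ℝ :=
  ‖(D : EuclideanSpace ℝ (Fin d) →L[ℝ] EuclideanSpace ℝ (Fin d))‖ *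
    ‖(D.symm : EuclideanSpace ℝ (Fin d) →L[ℝ] EuclideanSpace ℝ (Fin d))‖

theorem InnerProductGeometry.two_mul_one_sub_cos_angle_mul_le_norm_sub_sq
    {V : Type*} [NormedAddCommGroup V] [InnerProductSpace ℝ V] (x y : V) :
    2 * (1 - Real.cos (angle x y)) * (‖x‖ * ‖y‖) ≤ ‖x - y‖ ^ 2 := by
  have hcos := cos_angle_mul_norm_mul_norm x y
  rw [norm_sub_sq_real]
  nlinarith [sq_nonneg (‖x‖ - ‖y‖)]

theorem ContinuousLinearEquiv.norm_le_norm_symm_mul_norm_apply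
    {𝕜 E F : Type*} [NontriviallyNormedField 𝕜] [SeminormedAddCommGroup E]
    [SeminormedAddCommGroup F] [NormedSpace 𝕜 E] [NormedSpace 𝕜 F] (D : E ≃L[𝕜] F) (x : E) :
    ‖x‖ ≤ ‖(D.symm : F →L[𝕜] E)‖ * ‖D x‖ := by
  simpa using (D.symm : F →L[𝕜] E).le_opNorm (D x)

/-- For unit vectors `w, v`, `2(1 − cos∠(Dw, Dv)) ≤ K(D)²·‖w − v‖²`, where the angle
`∠(u₁,u₂) ∈ [0,π]` satisfies `cos∠(u₁,u₂) = ⟨u₁,u₂⟩/(‖u₁‖‖u₂‖)`. -/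
theorem stmt_2 {d : ℕ} (D : EuclideanSpace ℝ (Fin d) ≃L[ℝ] EuclideanSpace ℝ (Fin d))
    (w v : EuclideanSpace ℝ (Fin d)) (hw : ‖w‖ = 1) (hv : ‖v‖ = 1) :
    2 * (1 - Real.cos (angle (D w) (D v))) ≤ (qdist D) ^ 2 * ‖w - v‖ ^ 2 := by
  set A := (D : EuclideanSpace ℝ (Fin d) →L[ℝ] EuclideanSpace ℝ (Fin d))
  set B := ‖(D.symm : EuclideanSpace ℝ (Fin d) →L[ℝ] EuclideanSpace ℝ (Fin d))‖
  set c := Real.cos (angle (D w) (D v))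
  have hc : 0 ≤ 1 - c := by linarith [Real.cos_le_one (angle (D w) (D v))]
  have hDw : 1 ≤ B * ‖D w‖ := hw ▸ D.norm_le_norm_symm_mul_norm_apply w
  have hDv : 1 ≤ B * ‖D v‖ := hv ▸ D.norm_le_norm_symm_mul_norm_apply v
  have hscale : 1 ≤ B ^ 2 * (‖D w‖ * ‖D v‖) := by nlinarith
  calc 2 * (1 - c)
      ≤ 2 * (1 - c) * (B ^ 2 * (‖D w‖ * ‖D v‖)) := le_mul_of_one_le_right (by positivity) hscale
    _ = B ^ 2 * (2 * (1 - c) * (‖D w‖ * ‖D v‖)) := by ring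
    _ ≤ B ^ 2 * ‖D w - D v‖ ^ 2 := by
        gcongr; exact two_mul_one_sub_cos_angle_mul_le_norm_sub_sq _ _
    _ ≤ B ^ 2 * (‖A‖ * ‖w - v‖) ^ 2 := by
        gcongr
        rw [← map_sub]
        exact A.le_opNorm (w - v)
    _ = qdist D ^ 2 * ‖w - v‖ ^ 2 := by rw [qdist]; ring
end

section
/- Let F : ℤ → GL(d,ℝ) define a sequence of invertible linear maps with uniformly bounded distortion: there exist C_ε and ε > 0 with ‖F^n_k‖·‖(F^n_k)⁻¹‖ ≤ C_ε e^{ε|n|} for all k, n ∈ ℤ, where F^n_k denotes the composition of the maps along positions k, …, k+n−1. Fix a unit vector u ∈ ℝ^d and set u_k equal to the normalized image of u under the composition from position 0 to k. Then the formula ‖v‖_k² = Σ_{m∈ℤ} ‖F^m_k(v)‖² / (‖F^m_k(u_k)‖² · e^{3|m|ε}) defines a norm on ℝ^d at each position k, the series converging, and there exists M_ε with ‖v‖ ≤ ‖v‖_k ≤ M_ε‖v‖ for all k and v. -/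
/-! Let `A = F^m_k`. Since `‖u_k‖ = 1`, `‖A v‖ ≤ ‖A‖ ‖v‖ ≤ ‖A‖ ‖A⁻¹‖ ‖A u_k‖ ‖v‖`, so the distortion
bound makes the `m`-th term of the series at most `C_ε² e^{-ε|m|} ‖v‖²`. This gives convergence
and the upper bound with `M_ε² = C_ε² Σ_m e^{-ε|m|}`, while the `m = 0` term is `‖v‖²`, which gives
the lower bound. The square roots of the terms are seminorms in `v`, so Minkowski's inequality in
`ℓ²(ℤ)` yields the triangle inequality. -/

noncomputable section

/-- The cocycle `F^n_k = P(k+n)∘(P k)⁻¹`, where `P k` is the composition of the maps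
from position `0` to position `k` (so `F^n_k` is the composition along positions
`k, …, k+n−1`, with the inverse composition for `n < 0`). -/
def coc {d : ℕ} (P : ℤ → (EuclideanSpace ℝ (Fin d) ≃L[ℝ] EuclideanSpace ℝ (Fin d)))
    (k n : ℤ) : EuclideanSpace ℝ (Fin d) ≃L[ℝ] EuclideanSpace ℝ (Fin d) :=
  (P k).symm.trans (P (k + n))

/-- `u_k`: the normalized image of `u` under the composition from position `0` to `k`. -/
def uvec {d : ℕ} (P : ℤ → (EuclideanSpace ℝ (Fin d) ≃L[ℝ] EuclideanSpace ℝ (Fin d)))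
    (u : EuclideanSpace ℝ (Fin d)) (k : ℤ) : EuclideanSpace ℝ (Fin d) :=
  ‖P k u‖⁻¹ • P k u

/-- The term of the series defining the adapted norm `‖·‖_k`. -/
def nrmTerm {d : ℕ} (P : ℤ → (EuclideanSpace ℝ (Fin d) ≃L[ℝ] EuclideanSpace ℝ (Fin d)))
    (u : EuclideanSpace ℝ (Fin d)) (ε : ℝ) (k : ℤ) (v : EuclideanSpace ℝ (Fin d))
    (m : ℤ) : ℝ :=
  ‖coc P k m v‖ ^ 2 / (‖coc P k m (uvec P u k)‖ ^ 2 * Real.exp (3 * |(m : ℝ)| * ε))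

/-- The adapted norm `‖v‖_k = (Σ_m ‖F^m_k v‖²/(‖F^m_k u_k‖²·e^{3|m|ε}))^{1/2}`. -/
def nrmK {d : ℕ} (P : ℤ → (EuclideanSpace ℝ (Fin d) ≃L[ℝ] EuclideanSpace ℝ (Fin d)))
    (u : EuclideanSpace ℝ (Fin d)) (ε : ℝ) (k : ℤ) (v : EuclideanSpace ℝ (Fin d)) : ℝ :=
  Real.sqrt (∑' m : ℤ, nrmTerm P u ε k v m)

theorem ContinuousLinearEquiv.norm_apply_mul_norm_le {𝕜 E F : Type*} [NontriviallyNormedField 𝕜]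
    [SeminormedAddCommGroup E] [SeminormedAddCommGroup F] [NormedSpace 𝕜 E] [NormedSpace 𝕜 F]
    (A : E ≃L[𝕜] F) (v x : E) :
    ‖A v‖ * ‖x‖ ≤ ‖(A : E →L[𝕜] F)‖ * ‖(A.symm : F →L[𝕜] E)‖ * ‖A x‖ * ‖v‖ := by
  have hx : ‖x‖ ≤ ‖(A.symm : F →L[𝕜] E)‖ * ‖A x‖ := by
    simpa using (A.symm : F →L[𝕜] E).le_opNorm (A x)
  calc ‖A v‖ * ‖x‖ ≤ (‖(A : E →L[𝕜] F)‖ * ‖v‖) * (‖(A.symm : F →L[𝕜] E)‖ * ‖A x‖) :=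
        mul_le_mul ((A : E →L[𝕜] F).le_opNorm v) hx (norm_nonneg _) (by positivity)
    _ = _ := by ring

theorem Real.sqrt_tsum_le_of_sqrt_le {ι : Type*} {a b c : ι → ℝ} (ha : ∀ i, 0 ≤ a i)
    (hb : ∀ i, 0 ≤ b i) (hsa : Summable a) (hsb : Summable b) (hsc : Summable c)
    (h : ∀ i, √(c i) ≤ √(a i) + √(b i)) :
    √(∑' i, c i) ≤ √(∑' i, a i) + √(∑' i, b i) := by
  have hsq : ∀ {f : ι → ℝ}, (∀ i, 0 ≤ f i) → ∀ i, √(f i) ^ (2 : ℝ) = f i := fun hf i => by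
    rw [Real.rpow_two, Real.sq_sqrt (hf i)]
  obtain ⟨hsum, hle⟩ := Real.Lp_add_le_tsum_of_nonneg one_le_two
    (fun i => Real.sqrt_nonneg (a i)) (fun i => Real.sqrt_nonneg (b i))
    (by simpa only [hsq ha] using hsa) (by simpa only [hsq hb] using hsb)
  simp only [hsq ha, hsq hb, Real.rpow_two, ← Real.sqrt_eq_rpow] at hsum hle
  have hc : ∀ i, c i ≤ (√(a i) + √(b i)) ^ 2 := fun i =>
    (Real.sqrt_le_left (by positivity)).mp (h i)
  exact (Real.sqrt_le_sqrt (hsc.tsum_le_tsum hc hsum)).trans hle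

theorem Real.summable_exp_neg_mul_abs_int {ε : ℝ} (hε : 0 < ε) :
    Summable fun m : ℤ => Real.exp (-(ε * |(m : ℝ)|)) := by
  have hgeo : Summable fun n : ℕ => Real.exp (-ε) ^ n :=
    summable_geometric_of_lt_one (Real.exp_pos _).le (Real.exp_lt_one_iff.mpr (by linarith))
  have hpow : ∀ m : ℤ, Real.exp (-(ε * |(m : ℝ)|)) = Real.exp (-ε) ^ m.natAbs := fun m => by
    rw [← Real.exp_nat_mul, Nat.cast_natAbs, Int.cast_abs]
    ring_nf
  simp only [hpow]
  exact .of_nat_of_neg (by simpa using hgeo) (by simpa using hgeo)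

def BoundedDistortionAt {d : ℕ}
    (P : ℤ → (EuclideanSpace ℝ (Fin d) ≃L[ℝ] EuclideanSpace ℝ (Fin d))) (ε C : ℝ) (k : ℤ) :
    Prop :=
  ∀ m : ℤ, ‖(coc P k m : EuclideanSpace ℝ (Fin d) →L[ℝ] EuclideanSpace ℝ (Fin d))‖ *
    ‖((coc P k m).symm : EuclideanSpace ℝ (Fin d) →L[ℝ] EuclideanSpace ℝ (Fin d))‖ ≤
    C * Real.exp (ε * |(m : ℝ)|)

section AdaptedNorm

variable {d : ℕ} {P : ℤ → (EuclideanSpace ℝ (Fin d) ≃L[ℝ] EuclideanSpace ℝ (Fin d))}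
  {u : EuclideanSpace ℝ (Fin d)} {ε : ℝ} {k : ℤ}

theorem coc_zero_apply (x : EuclideanSpace ℝ (Fin d)) : coc P k 0 x = x := by
  simp [coc]

theorem norm_uvec (hu : u ≠ 0) : ‖uvec P u k‖ = 1 := by
  have hPu : P k u ≠ 0 := (map_ne_zero_iff _ (P k).injective).mpr hu
  rw [uvec, norm_smul, norm_inv, norm_norm, inv_mul_cancel₀ (norm_ne_zero_iff.mpr hPu)]

theorem norm_coc_uvec_pos (hu : u ≠ 0) (m : ℤ) : 0 < ‖coc P k m (uvec P u k)‖ := by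
  have huk : uvec P u k ≠ 0 := norm_ne_zero_iff.mp ((norm_uvec hu).symm ▸ one_ne_zero)
  exact norm_pos_iff.mpr ((map_ne_zero_iff _ (coc P k m).injective).mpr huk)

theorem nrmTerm_nonneg (v : EuclideanSpace ℝ (Fin d)) (m : ℤ) : 0 ≤ nrmTerm P u ε k v m := by
  unfold nrmTerm
  positivity

theorem nrmTerm_zero (hu : u ≠ 0) (v : EuclideanSpace ℝ (Fin d)) :
    nrmTerm P u ε k v 0 = ‖v‖ ^ 2 := by
  simp [nrmTerm, coc_zero_apply, norm_uvec hu]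

theorem nrmTerm_smul (c : ℝ) (v : EuclideanSpace ℝ (Fin d)) (m : ℤ) :
    nrmTerm P u ε k (c • v) m = c ^ 2 * nrmTerm P u ε k v m := by
  simp only [nrmTerm, map_smul, norm_smul, Real.norm_eq_abs, mul_pow, sq_abs, mul_div_assoc]

theorem sqrt_nrmTerm (v : EuclideanSpace ℝ (Fin d)) (m : ℤ) :
    √(nrmTerm P u ε k v m) = ‖coc P k m v‖ /
      √(‖coc P k m (uvec P u k)‖ ^ 2 * Real.exp (3 * |(m : ℝ)| * ε)) := by
  rw [nrmTerm, Real.sqrt_div' _ (by positivity), Real.sqrt_sq (norm_nonneg _)]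

theorem sqrt_nrmTerm_add_le (v w : EuclideanSpace ℝ (Fin d)) (m : ℤ) :
    √(nrmTerm P u ε k (v + w) m) ≤ √(nrmTerm P u ε k v m) + √(nrmTerm P u ε k w m) := by
  rw [sqrt_nrmTerm, sqrt_nrmTerm, sqrt_nrmTerm, ← add_div, map_add]
  gcongr
  exact norm_add_le _ _

theorem nrmTerm_le (hu : u ≠ 0) {C : ℝ}
    (hK : BoundedDistortionAt P ε C k) (m : ℤ) (v : EuclideanSpace ℝ (Fin d)) :
    nrmTerm P u ε k v m ≤ C ^ 2 * ‖v‖ ^ 2 * Real.exp (-(ε * |(m : ℝ)|)) := by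
  set b := ‖coc P k m (uvec P u k)‖
  set K := C * Real.exp (ε * |(m : ℝ)|)
  have hb : 0 < b := norm_coc_uvec_pos hu m
  have hv : ‖coc P k m v‖ ≤ K * b * ‖v‖ := by
    have := (coc P k m).norm_apply_mul_norm_le v (uvec P u k)
    rw [norm_uvec hu, mul_one] at this
    exact this.trans (by gcongr; exact hK m)
  have hexp : Real.exp (ε * |(m : ℝ)|) ^ 2 =
      Real.exp (-(ε * |(m : ℝ)|)) * Real.exp (3 * |(m : ℝ)| * ε) := by
    rw [sq, ← Real.exp_add, ← Real.exp_add]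
    ring_nf
  calc nrmTerm P u ε k v m ≤ (K * b * ‖v‖) ^ 2 / (b ^ 2 * Real.exp (3 * |(m : ℝ)| * ε)) := by
        unfold nrmTerm
        gcongr
    _ = C ^ 2 * ‖v‖ ^ 2 * Real.exp (-(ε * |(m : ℝ)|)) := by
        rw [mul_pow, mul_pow, mul_pow, hexp]
        field_simp

theorem summable_nrmTerm (hu : u ≠ 0) (hε : 0 < ε) {C : ℝ}
    (hK : BoundedDistortionAt P ε C k)
    (v : EuclideanSpace ℝ (Fin d)) : Summable (nrmTerm P u ε k v) :=
  .of_nonneg_of_le (nrmTerm_nonneg v) (fun m => nrmTerm_le hu hK m v)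
    ((Real.summable_exp_neg_mul_abs_int hε).mul_left _)

theorem norm_le_nrmK (hu : u ≠ 0) {v : EuclideanSpace ℝ (Fin d)}
    (hv : Summable (nrmTerm P u ε k v)) : ‖v‖ ≤ nrmK P u ε k v := by
  rw [← Real.sqrt_sq (norm_nonneg v), ← nrmTerm_zero (P := P) (ε := ε) (k := k) hu]
  exact Real.sqrt_le_sqrt (hv.le_tsum 0 fun m _ => nrmTerm_nonneg v m)

theorem nrmK_smul (c : ℝ) (v : EuclideanSpace ℝ (Fin d)) :
    nrmK P u ε k (c • v) = |c| * nrmK P u ε k v := by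
  rw [nrmK, nrmK, tsum_congr (nrmTerm_smul c v), tsum_mul_left, Real.sqrt_mul (sq_nonneg c),
    Real.sqrt_sq_eq_abs]

theorem nrmK_add_le {v w : EuclideanSpace ℝ (Fin d)} (hv : Summable (nrmTerm P u ε k v))
    (hw : Summable (nrmTerm P u ε k w)) (hvw : Summable (nrmTerm P u ε k (v + w))) :
    nrmK P u ε k (v + w) ≤ nrmK P u ε k v + nrmK P u ε k w :=
  Real.sqrt_tsum_le_of_sqrt_le (nrmTerm_nonneg v) (nrmTerm_nonneg w) hv hw hvw
    (sqrt_nrmTerm_add_le v w)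

theorem nrmK_le (hu : u ≠ 0) (hε : 0 < ε) {C : ℝ}
    (hK : BoundedDistortionAt P ε C k)
    (v : EuclideanSpace ℝ (Fin d)) :
    nrmK P u ε k v ≤ √(C ^ 2 * ∑' m : ℤ, Real.exp (-(ε * |(m : ℝ)|))) * ‖v‖ := by
  have hexp := Real.summable_exp_neg_mul_abs_int hε
  have hsum : ∑' m, nrmTerm P u ε k v m ≤
      (C ^ 2 * ∑' m : ℤ, Real.exp (-(ε * |(m : ℝ)|))) * ‖v‖ ^ 2 := by
    calc ∑' m, nrmTerm P u ε k v m
        ≤ ∑' m : ℤ, C ^ 2 * ‖v‖ ^ 2 * Real.exp (-(ε * |(m : ℝ)|)) :=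
          (summable_nrmTerm hu hε hK v).tsum_le_tsum (fun m => nrmTerm_le hu hK m v)
            (hexp.mul_left _)
      _ = _ := by rw [tsum_mul_left]; ring
  calc nrmK P u ε k v ≤ √((C ^ 2 * ∑' m : ℤ, Real.exp (-(ε * |(m : ℝ)|))) * ‖v‖ ^ 2) :=
        Real.sqrt_le_sqrt hsum
    _ = _ := by rw [Real.sqrt_mul' _ (sq_nonneg _), Real.sqrt_sq (norm_nonneg v)]

end AdaptedNorm

theorem stmt_7_general {d : ℕ}
    (P : ℤ → (EuclideanSpace ℝ (Fin d) ≃L[ℝ] EuclideanSpace ℝ (Fin d)))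
    (u : EuclideanSpace ℝ (Fin d)) (hu : ‖u‖ = 1)
    (ε Cε : ℝ) (hε : 0 < ε)
    (hK : ∀ k n : ℤ,
      ‖(coc P k n : EuclideanSpace ℝ (Fin d) →L[ℝ] EuclideanSpace ℝ (Fin d))‖ *
        ‖((coc P k n).symm : EuclideanSpace ℝ (Fin d) →L[ℝ] EuclideanSpace ℝ (Fin d))‖ ≤
        Cε * Real.exp (ε * |(n : ℝ)|)) :
    -- the series converges
    (∀ (k : ℤ) (v : EuclideanSpace ℝ (Fin d)), Summable (nrmTerm P u ε k v)) ∧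
    -- `‖·‖_k` is a norm at each position `k`
    (∀ (k : ℤ) (v : EuclideanSpace ℝ (Fin d)), nrmK P u ε k v = 0 ↔ v = 0) ∧
    (∀ (k : ℤ) (c : ℝ) (v : EuclideanSpace ℝ (Fin d)),
      nrmK P u ε k (c • v) = |c| * nrmK P u ε k v) ∧
    (∀ (k : ℤ) (v w : EuclideanSpace ℝ (Fin d)),
      nrmK P u ε k (v + w) ≤ nrmK P u ε k v + nrmK P u ε k w) ∧
    -- comparison with the background norm
    (∃ Mε : ℝ, ∀ (k : ℤ) (v : EuclideanSpace ℝ (Fin d)),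
      ‖v‖ ≤ nrmK P u ε k v ∧ nrmK P u ε k v ≤ Mε * ‖v‖) := by
  have hu0 : u ≠ 0 := norm_ne_zero_iff.mp (hu ▸ one_ne_zero)
  have hsum : ∀ k v, Summable (nrmTerm P u ε k v) := fun k v => summable_nrmTerm hu0 hε (hK k) v
  refine ⟨hsum, fun k v => ⟨fun h => ?_, ?_⟩, fun k => nrmK_smul,
    fun k v w => nrmK_add_le (hsum k v) (hsum k w) (hsum k (v + w)),
    ⟨_, fun k v => ⟨norm_le_nrmK hu0 (hsum k v), nrmK_le hu0 hε (hK k) v⟩⟩⟩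
  · exact norm_le_zero_iff.mp (h ▸ norm_le_nrmK hu0 (hsum k v))
  · rintro rfl
    simp [nrmK, nrmTerm]

theorem stmt_7 {d : ℕ}
    (F P : ℤ → (EuclideanSpace ℝ (Fin d) ≃L[ℝ] EuclideanSpace ℝ (Fin d)))
    (hP0 : P 0 = ContinuousLinearEquiv.refl ℝ (EuclideanSpace ℝ (Fin d)))
    (hP : ∀ k, P (k + 1) = (P k).trans (F k))
    (u : EuclideanSpace ℝ (Fin d)) (hu : ‖u‖ = 1)
    (ε Cε : ℝ) (hε : 0 < ε)
    (hK : ∀ k n : ℤ,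
      ‖(coc P k n : EuclideanSpace ℝ (Fin d) →L[ℝ] EuclideanSpace ℝ (Fin d))‖ *
        ‖((coc P k n).symm : EuclideanSpace ℝ (Fin d) →L[ℝ] EuclideanSpace ℝ (Fin d))‖ ≤
        Cε * Real.exp (ε * |(n : ℝ)|)) :
    -- the series converges
    (∀ (k : ℤ) (v : EuclideanSpace ℝ (Fin d)), Summable (nrmTerm P u ε k v)) ∧
    -- `‖·‖_k` is a norm at each position `k`
    (∀ (k : ℤ) (v : EuclideanSpace ℝ (Fin d)), nrmK P u ε k v = 0 ↔ v = 0) ∧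
    (∀ (k : ℤ) (c : ℝ) (v : EuclideanSpace ℝ (Fin d)),
      nrmK P u ε k (c • v) = |c| * nrmK P u ε k v) ∧
    (∀ (k : ℤ) (v w : EuclideanSpace ℝ (Fin d)),
      nrmK P u ε k (v + w) ≤ nrmK P u ε k v + nrmK P u ε k w) ∧
    -- comparison with the background norm
    (∃ Mε : ℝ, ∀ (k : ℤ) (v : EuclideanSpace ℝ (Fin d)),
      ‖v‖ ≤ nrmK P u ε k v ∧ nrmK P u ε k v ≤ Mε * ‖v‖) :=
  stmt_7_general P u hu ε Cε hε hK
end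
end

section
/- Let σ be a conformal structure on ℝ^d represented by a symmetric positive definite matrix C with det C = 1, and let A be an invertible linear map with ‖A − Id‖ ≤ (6‖C⁻¹‖·‖C‖)⁻¹. Then dist(σ, A*(σ)) ≤ 3d·‖C⁻¹‖·‖C‖·‖A − Id‖, where A*(σ) is represented by (det AᵀA)^{−1/d}·AᵀCA and dist is the GL(d,ℝ)-invariant metric on the space of determinant-1 positive definite symmetric matrices satisfying dist(Id, C') ≤ (d/2)·max{log‖C'‖, log‖C'⁻¹‖}. -/
/-! Conjugating by `X` turns `A` into `B = X⁻¹AX` and the matrix `X[A*(σ)]` into the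
determinant-one rescaling of `BᵀB`. For a positive definite `N` all eigenvalues lie in
`[‖N⁻¹‖⁻¹, ‖N‖]`, hence so does `det N ^ (1/d)`, and the log-eigenvalues of the rescaled
matrix are bounded by the log of the condition number `‖N‖‖N⁻¹‖`. For `N = BᵀB` this is
`2 log (‖B‖‖B⁻¹‖) ≤ 2 log ((1 + δ)/(1 - δ))` with `δ = ‖B - 1‖`, which is linear in `δ` for
`δ ≤ 1/6`. Finally `δ ≤ ‖X‖‖X⁻¹‖‖A - 1‖`, and `‖C⁻¹‖‖C‖ = (‖X‖‖X⁻¹‖)²` because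
`C = X⁻¹ᵀX⁻¹`. -/

open Matrix

noncomputable section

/-- The `ℓ²` operator norm of a real `d×d` matrix. -/
def opNorm {d : ℕ} (M : Matrix (Fin d) (Fin d) ℝ) : ℝ :=
  ‖Matrix.toEuclideanCLM (𝕜 := ℝ) M‖

/-- The distance from `Id` in the invariant metric on determinant-one positive definite
symmetric matrices: `dist(Id, C') = (√d/2)·(Σᵢ (log λᵢ)²)^{1/2}` for eigenvalues `λᵢ`. -/
def distId {d : ℕ} (C' : Matrix (Fin d) (Fin d) ℝ) : ℝ :=
  if h : C'.IsHermitian then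
    Real.sqrt d / 2 * Real.sqrt (∑ i, (Real.log (h.eigenvalues i)) ^ 2)
  else 0

open Real
open scoped Matrix.Norms.L2Operator

section NormedRing

variable {R : Type*} [NormedRing R]

lemma norm_mul_mul_sub_one_le {a b b' : R} (h : b' * b = 1) :
    ‖b' * a * b - 1‖ ≤ ‖b‖ * ‖b'‖ * ‖a - 1‖ := by
  have : b' * a * b - 1 = b' * (a - 1) * b := by rw [mul_sub, sub_mul, mul_one, h]
  calc ‖b' * a * b - 1‖ ≤ ‖b'‖ * ‖a - 1‖ * ‖b‖ := by grw [this, norm_mul_le, norm_mul_le]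
    _ = ‖b‖ * ‖b'‖ * ‖a - 1‖ := by ring

variable [NormOneClass R]

lemma norm_mul_norm_le_of_mul_eq_one {b b' : R} (h : b * b' = 1) (hb : ‖b - 1‖ < 1) :
    ‖b‖ * ‖b'‖ ≤ (1 + ‖b - 1‖) / (1 - ‖b - 1‖) := by
  set δ := ‖b - 1‖
  have hb_le : ‖b‖ ≤ 1 + δ := by
    simpa only [add_sub_cancel, norm_one] using norm_add_le (1 : R) (b - 1)
  have hb'_le : ‖b'‖ ≤ 1 + δ * ‖b'‖ := by
    calc ‖b'‖ = ‖1 - (b - 1) * b'‖ := by rw [sub_mul, h, one_mul, sub_sub_cancel]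
      _ ≤ ‖(1 : R)‖ + ‖(b - 1) * b'‖ := norm_sub_le _ _
      _ ≤ 1 + δ * ‖b'‖ := by grw [norm_one, norm_mul_le]
  rw [le_div_iff₀ (by linarith)]
  nlinarith [norm_nonneg b, norm_nonneg b']

lemma one_le_norm_mul_norm_of_mul_eq_one {b b' : R} (h : b * b' = 1) :
    1 ≤ ‖b‖ * ‖b'‖ := by
  simpa [h] using norm_mul_le b b'

end NormedRing

lemma log_le_of_le_one_add_div_one_sub {x δ : ℝ} (hx : 0 < x) (hδ₀ : 0 ≤ δ) (hδ : δ ≤ 1 / 6)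
    (h : x ≤ (1 + δ) / (1 - δ)) : log x ≤ 12 / 5 * δ := by
  have hδ' : 0 < 1 - δ := by linarith
  calc log x ≤ x - 1 := log_le_sub_one_of_pos hx
    _ ≤ (1 + δ) / (1 - δ) - 1 := by linarith
    _ = 2 * δ / (1 - δ) := by field_simp; ring
    _ ≤ 12 / 5 * δ := by
      rw [div_le_iff₀ hδ']
      nlinarith

namespace Matrix

variable {n : Type*} [Fintype n] [DecidableEq n]

lemma l2_opNorm_transpose (B : Matrix n n ℝ) : ‖Bᵀ‖ = ‖B‖ := by
  rw [← conjTranspose_eq_transpose_of_trivial, l2_opNorm_conjTranspose]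

lemma l2_opNorm_transpose_mul_self (B : Matrix n n ℝ) : ‖Bᵀ * B‖ = ‖B‖ * ‖B‖ := by
  rw [← conjTranspose_eq_transpose_of_trivial, l2_opNorm_conjTranspose_mul_self]

lemma l2_opNorm_transpose_mul_self_mul_inv (B : Matrix n n ℝ) :
    ‖Bᵀ * B‖ * ‖(Bᵀ * B)⁻¹‖ = (‖B‖ * ‖B⁻¹‖) ^ 2 := by
  have : (Bᵀ * B)⁻¹ = (B⁻¹ᵀ)ᵀ * B⁻¹ᵀ := by
    rw [mul_inv_rev, transpose_transpose, transpose_nonsing_inv]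
  rw [this, l2_opNorm_transpose_mul_self, l2_opNorm_transpose_mul_self, l2_opNorm_transpose]
  ring

lemma eq_transpose_inv_mul_inv_of_transpose_mul_mul_eq_one {C X : Matrix n n ℝ}
    (hX : IsUnit X.det) (h : Xᵀ * C * X = 1) : C = X⁻¹ᵀ * X⁻¹ := by
  calc C = (X * X⁻¹)ᵀ * C * (X * X⁻¹) := by simp [mul_nonsing_inv X hX]
    _ = X⁻¹ᵀ * (Xᵀ * C * X) * X⁻¹ := by simp only [transpose_mul, Matrix.mul_assoc]
    _ = X⁻¹ᵀ * X⁻¹ := by rw [h, Matrix.mul_one]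

lemma l2_opNorm_mul_l2_opNorm_inv_le [Nonempty n] {C X : Matrix n n ℝ} (hX : IsUnit X.det)
    (h : Xᵀ * C * X = 1) : ‖X‖ * ‖X⁻¹‖ ≤ ‖C⁻¹‖ * ‖C‖ := by
  have hκ := l2_opNorm_transpose_mul_self_mul_inv X⁻¹
  rw [nonsing_inv_nonsing_inv X hX, mul_comm ‖X⁻¹‖] at hκ
  rw [eq_transpose_inv_mul_inv_of_transpose_mul_mul_eq_one hX h, mul_comm ‖(X⁻¹ᵀ * X⁻¹)⁻¹‖, hκ]
  exact le_self_pow₀ (one_le_norm_mul_norm_of_mul_eq_one (mul_nonsing_inv X hX)) two_ne_zero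

namespace IsHermitian

lemma eigenvalues_le_l2_opNorm {M : Matrix n n ℝ} (hM : M.IsHermitian) (i : n) :
    hM.eigenvalues i ≤ ‖M‖ :=
  have : Nonempty n := ⟨i⟩
  (le_abs_self _).trans (spectrum.norm_le_norm_of_mem (hM.eigenvalues_mem_spectrum_real i))

end IsHermitian

namespace PosDef

variable {M : Matrix n n ℝ}

lemma inv_eigenvalues_le_l2_opNorm_inv (hM : M.PosDef) (i : n) :
    (hM.1.eigenvalues i)⁻¹ ≤ ‖M⁻¹‖ := by
  have : Nonempty n := ⟨i⟩
  obtain ⟨u, hu⟩ := hM.isUnit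
  have hmem : (hM.1.eigenvalues i)⁻¹ ∈ spectrum ℝ (↑u⁻¹ : Matrix n n ℝ) :=
    spectrum.inv₀_mem_inv_iff.mpr (hu ▸ hM.1.eigenvalues_mem_spectrum_real i)
  rw [coe_units_inv, hu] at hmem
  exact (le_abs_self _).trans (spectrum.norm_le_norm_of_mem hmem)

lemma log_eigenvalues_le (hM : M.PosDef) (i : n) : log (hM.1.eigenvalues i) ≤ log ‖M‖ :=
  log_le_log (hM.eigenvalues_pos i) (hM.1.eigenvalues_le_l2_opNorm i)

lemma neg_log_eigenvalues_le (hM : M.PosDef) (i : n) : -log (hM.1.eigenvalues i) ≤ log ‖M⁻¹‖ := by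
  rw [← log_inv]
  exact log_le_log (inv_pos.mpr (hM.eigenvalues_pos i)) (hM.inv_eigenvalues_le_l2_opNorm_inv i)

lemma log_det_eq_sum (hM : M.PosDef) : log M.det = ∑ i, log (hM.1.eigenvalues i) := by
  rw [hM.1.det_eq_prod_eigenvalues]
  exact log_prod fun i _ ↦ (hM.eigenvalues_pos i).ne'

lemma log_det_le (hM : M.PosDef) : log M.det ≤ Fintype.card n * log ‖M‖ := by
  rw [hM.log_det_eq_sum, ← nsmul_eq_mul, ← Finset.card_univ, ← Finset.sum_const]
  exact Finset.sum_le_sum fun i _ ↦ hM.log_eigenvalues_le i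

lemma neg_log_det_le (hM : M.PosDef) : -log M.det ≤ Fintype.card n * log ‖M⁻¹‖ := by
  rw [hM.log_det_eq_sum, ← Finset.sum_neg_distrib, ← nsmul_eq_mul, ← Finset.card_univ,
    ← Finset.sum_const]
  exact Finset.sum_le_sum fun i _ ↦ hM.neg_log_eigenvalues_le i

end PosDef

end Matrix

lemma opNorm_eq_l2_opNorm {d : ℕ} (M : Matrix (Fin d) (Fin d) ℝ) : opNorm M = ‖M‖ := rfl

lemma distId_le {d : ℕ} {M : Matrix (Fin d) (Fin d) ℝ} (hM : M.PosDef) :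
    distId M ≤ d / 2 * max (log ‖M‖) (log ‖M⁻¹‖) := by
  set L := max (log ‖M‖) (log ‖M⁻¹‖)
  have habs : ∀ i, |log (hM.1.eigenvalues i)| ≤ L := fun i ↦
    abs_le.2 ⟨by linarith [hM.neg_log_eigenvalues_le i, le_max_right (log ‖M‖) (log ‖M⁻¹‖)],
      (hM.log_eigenvalues_le i).trans (le_max_left _ _)⟩
  have hsum : ∑ i, log (hM.1.eigenvalues i) ^ 2 ≤ d * L ^ 2 := by
    simpa [sq_abs] using
      Finset.sum_le_sum fun i (_ : i ∈ Finset.univ) ↦ pow_le_pow_left₀ (abs_nonneg _) (habs i) 2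
  rcases Nat.eq_zero_or_pos d with rfl | hd
  · simp [distId]
  have hL : 0 ≤ L := (abs_nonneg _).trans (habs ⟨0, hd⟩)
  calc distId M = √d / 2 * √(∑ i, log (hM.1.eigenvalues i) ^ 2) := by rw [distId, dif_pos hM.1]
    _ ≤ √d / 2 * √(d * L ^ 2) := by gcongr
    _ = d / 2 * L := by
      rw [sqrt_mul (Nat.cast_nonneg d), sqrt_sq hL, ← mul_assoc, div_mul_eq_mul_div,
        mul_self_sqrt (Nat.cast_nonneg d)]

lemma distId_det_rpow_smul_le {d : ℕ} (hd : 0 < d) {N : Matrix (Fin d) (Fin d) ℝ}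
    (hN : N.PosDef) : distId (N.det ^ (-(1 : ℝ) / d) • N) ≤ d / 2 * log (‖N‖ * ‖N⁻¹‖) := by
  set c := N.det ^ (-(1 : ℝ) / d)
  -- `det N` is a product of `d` eigenvalues in `[‖N⁻¹‖⁻¹, ‖N‖]`, so `‖N‖⁻¹ ≤ c ≤ ‖N⁻¹‖`.
  have hc : 0 < c := rpow_pos_of_pos hN.det_pos _
  have hlog_c : log c = -log N.det / d := by rw [log_rpow hN.det_pos]; ring
  have hd' : (0 : ℝ) < d := Nat.cast_pos.mpr hd
  have hN_pos : 0 < ‖N‖ :=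
    (hN.eigenvalues_pos ⟨0, hd⟩).trans_le (hN.1.eigenvalues_le_l2_opNorm _)
  have hN_inv_pos : 0 < ‖N⁻¹‖ :=
    (inv_pos.mpr (hN.eigenvalues_pos ⟨0, hd⟩)).trans_le (hN.inv_eigenvalues_le_l2_opNorm_inv _)
  have h_inv : (c • N)⁻¹ = c⁻¹ • N⁻¹ := by
    simpa [Units.smul_def] using
      Matrix.inv_smul' (k := Units.mk0 c hc.ne') (h := hN.det_pos.ne'.isUnit)
  have h_upper : log ‖c • N‖ ≤ log (‖N‖ * ‖N⁻¹‖) := by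
    have := hN.neg_log_det_le
    rw [norm_smul, norm_of_nonneg hc.le, log_mul hc.ne' hN_pos.ne',
      log_mul hN_pos.ne' hN_inv_pos.ne', hlog_c, div_add' _ _ _ hd'.ne', div_le_iff₀ hd']
    simp only [Fintype.card_fin] at this
    linarith
  have h_lower : log ‖(c • N)⁻¹‖ ≤ log (‖N‖ * ‖N⁻¹‖) := by
    have := hN.log_det_le
    rw [h_inv, norm_smul, norm_inv, norm_of_nonneg hc.le,
      log_mul (inv_pos.mpr hc).ne' hN_inv_pos.ne', log_mul hN_pos.ne' hN_inv_pos.ne', log_inv,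
      hlog_c, neg_div, neg_neg, div_add' _ _ _ hd'.ne', div_le_iff₀ hd']
    simp only [Fintype.card_fin] at this
    linarith
  calc distId (c • N) ≤ d / 2 * max (log ‖c • N‖) (log ‖(c • N)⁻¹‖) := distId_le (hN.smul hc)
    _ ≤ d / 2 * log (‖N‖ * ‖N⁻¹‖) := by gcongr; exact max_le h_upper h_lower

lemma distId_det_rpow_smul_transpose_mul_self_le {d : ℕ} (hd : 0 < d)
    {B : Matrix (Fin d) (Fin d) ℝ} (hB : IsUnit B.det) (hδ : ‖B - 1‖ ≤ 1 / 6) :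
    distId ((Bᵀ * B).det ^ (-(1 : ℝ) / d) • (Bᵀ * B)) ≤ 12 / 5 * d * ‖B - 1‖ := by
  have : Nonempty (Fin d) := ⟨⟨0, hd⟩⟩
  have hB_inv := mul_nonsing_inv B hB
  have hBB : (Bᵀ * B).PosDef := PosDef.conjTranspose_mul_self B
    (mulVec_injective_iff_isUnit.mpr ((isUnit_iff_isUnit_det B).mpr hB))
  calc _ ≤ d / 2 * log (‖Bᵀ * B‖ * ‖(Bᵀ * B)⁻¹‖) := distId_det_rpow_smul_le hd hBB
    _ = d * log (‖B‖ * ‖B⁻¹‖) := by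
      rw [l2_opNorm_transpose_mul_self_mul_inv, log_pow]; push_cast; ring
    _ ≤ d * (12 / 5 * ‖B - 1‖) := by
      gcongr
      exact log_le_of_le_one_add_div_one_sub
        (one_pos.trans_le (one_le_norm_mul_norm_of_mul_eq_one hB_inv)) (norm_nonneg _) hδ
        (norm_mul_norm_le_of_mul_eq_one hB_inv (by linarith))
    _ = 12 / 5 * d * ‖B - 1‖ := by ring

theorem stmt_9_general {d : ℕ} (hd : 0 < d) (C A : Matrix (Fin d) (Fin d) ℝ)
    (hA : IsUnit A.det)
    (hclose : opNorm (A - 1) ≤ (6 * (opNorm C⁻¹ * opNorm C))⁻¹) :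
    ∀ X : Matrix (Fin d) (Fin d) ℝ, X.det = 1 → Xᵀ * C * X = 1 →
      distId (((Aᵀ * A).det ^ (-(1 : ℝ) / d)) • (Xᵀ * (Aᵀ * C * A) * X)) ≤
        3 * d * (opNorm C⁻¹ * opNorm C) * opNorm (A - 1) := by
  intro X hX hXCX
  have : Nonempty (Fin d) := ⟨⟨0, hd⟩⟩
  simp only [opNorm_eq_l2_opNorm] at hclose ⊢
  have hX_unit : IsUnit X.det := hX ▸ isUnit_one
  have hdet_conj := det_conj' ((isUnit_iff_isUnit_det X).mpr hX_unit) A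
  set B := X⁻¹ * A * X
  have hB : IsUnit B.det := hdet_conj ▸ hA
  have hN : Xᵀ * (Aᵀ * C * A) * X = Bᵀ * B := by
    simp only [B, eq_transpose_inv_mul_inv_of_transpose_mul_mul_eq_one hX_unit hXCX,
      transpose_mul, Matrix.mul_assoc]
  have hdet_N : (Aᵀ * A).det = (Bᵀ * B).det := by simp only [det_mul, det_transpose, hdet_conj]
  have hκ := l2_opNorm_mul_l2_opNorm_inv_le hX_unit hXCX
  have hκ_pos : 0 < ‖C⁻¹‖ * ‖C‖ :=
    one_pos.trans_le ((one_le_norm_mul_norm_of_mul_eq_one (mul_nonsing_inv X hX_unit)).trans hκ)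
  have hδ : ‖B - 1‖ ≤ ‖C⁻¹‖ * ‖C‖ * ‖A - 1‖ :=
    (norm_mul_mul_sub_one_le (nonsing_inv_mul X hX_unit)).trans (by gcongr)
  have hδ6 : ‖B - 1‖ ≤ 1 / 6 := by
    refine hδ.trans ((mul_le_mul_of_nonneg_left hclose hκ_pos.le).trans_eq ?_)
    rw [mul_inv, mul_left_comm, mul_inv_cancel₀ hκ_pos.ne', mul_one, one_div]
  rw [hN, hdet_N]
  refine (distId_det_rpow_smul_transpose_mul_self_le hd hB hδ6).trans ?_
  nlinarith [mul_le_mul_of_nonneg_left hδ (Nat.cast_nonneg (α := ℝ) d), norm_nonneg (B - 1)]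

/-- If `‖A − Id‖ ≤ (6‖C⁻¹‖‖C‖)⁻¹` then `dist(σ, A*(σ)) ≤ 3d‖C⁻¹‖‖C‖‖A − Id‖`.  Here
`A*(σ)` is represented by `(det AᵀA)^{−1/d}·AᵀCA`, and the distance is computed, using
invariance, as `dist(Id, X[A*(σ)])` for any `X` of determinant one with `XᵀCX = Id`. -/
theorem stmt_9 {d : ℕ} (hd : 0 < d) (C A : Matrix (Fin d) (Fin d) ℝ)
    (hC : C.PosDef) (hdet : C.det = 1) (hA : IsUnit A.det)
    (hclose : opNorm (A - 1) ≤ (6 * (opNorm C⁻¹ * opNorm C))⁻¹) :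
    ∀ X : Matrix (Fin d) (Fin d) ℝ, X.det = 1 → Xᵀ * C * X = 1 →
      distId (((Aᵀ * A).det ^ (-(1 : ℝ) / d)) • (Xᵀ * (Aᵀ * C * A) * X)) ≤
        3 * d * (opNorm C⁻¹ * opNorm C) * opNorm (A - 1) :=
  stmt_9_general hd C A hA hclose
end
end
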